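/- Let A be the generator of a C₀-semigroup (e^{tA})_{t≥0} on a complex Banach space X and let φ ∈ X* with φ ∉ dom A*. Then for every ε > 0 there exist a vector y ∈ X with φ(y) = 1 and a strictly increasing sequence of indices (n_k)_{k≥0} such that |φ((e^{(1/n_k)A} P_y)^{n_k} y)| ≥ e^k − 2ε for all k ≥ 0, where P_y is the rank-one projection P_y z = φ(z) y. In particular, the sequence (e^{(1/n)A} P_y)^n y does not converge weakly. -/

import Mathlib

open Filter Topology

/-- A C₀-semigroup on a complex normed space `X`: a strongly continuous map
`T : [0,∞) → B(X)` with `T 0 = I` and `T (s+t) = T s ∘ T t`. -/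
structure C0Semigroup (X : Type*) [NormedAddCommGroup X] [NormedSpace ℂ X] where
  T : ℝ → X →L[ℂ] X
  T_zero : T 0 = 1
  T_add : ∀ s t : ℝ, 0 ≤ s → 0 ≤ t → T (s + t) = (T s).comp (T t)
  T_cont : ∀ x : X, ContinuousOn (fun t => T t x) (Set.Ici (0 : ℝ))

/-- `A`, with domain `domA`, is the generator of the C₀-semigroup `Sg`:
`domA` is exactly the set of `x ∈ X` for which `(T t x - x)/t` converges as
`t → 0⁺`, and `A x` is this limit. -/
def IsGeneratorOf {X : Type*} [NormedAddCommGroup X] [NormedSpace ℂ X]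
    (Sg : C0Semigroup X) (domA : Set X) (A : X → X) : Prop :=
  (∀ x : X, x ∈ domA ↔
      ∃ y : X, Tendsto (fun t : ℝ => t⁻¹ • (Sg.T t x - x)) (𝓝[>] 0) (𝓝 y)) ∧
  (∀ x ∈ domA, Tendsto (fun t : ℝ => t⁻¹ • (Sg.T t x - x)) (𝓝[>] 0) (𝓝 (A x)))

/-!
Since `φ ∉ dom A*`, the functional `x ↦ φ (A x)` is unbounded on `dom A ∩ ker φ`, so every
`s ∈ dom A` with `φ s = 1` can be moved by an arbitrarily small `x ∈ dom A ∩ ker φ` to make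
`Re φ (A (s + x))` as large as we like. For such `s`, `φ (e^{A/n} s) = 1 + φ (A s) / n + o(1/n)`,
so `‖φ (e^{A/n} s)‖ ^ n` eventually exceeds `exp (Re φ (A s))`. Hence for all `k, N` the open set
of `y` with `‖φ (e^{A/n} y)‖ ^ n > e^k` for some `n ≥ N` is dense in the closure of
`{s ∈ dom A | φ s = 1}`, and Baire's theorem there yields a `y` lying in all of them.
Finally `φ ((e^{A/n} P_y)^n y) = φ (e^{A/n} y) ^ n`.
-/

theorem exists_mem_closure_forall_mem_of_subset_closure_inter {X ι : Type*}
    [PseudoMetricSpace X] [CompleteSpace X] [Countable ι] {D : Set X} (hD : D.Nonempty)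
    {G : ι → Set X} (hG : ∀ i, IsOpen (G i)) (hdense : ∀ i, D ⊆ closure (D ∩ G i)) :
    ∃ y ∈ closure D, ∀ i, y ∈ G i := by
  have : CompleteSpace (closure D) := isClosed_closure.completeSpace_coe
  have : Nonempty (closure D) := hD.closure.to_subtype
  have hG' : ∀ i, Dense ((↑) ⁻¹' G i : Set (closure D)) := fun i => by
    rw [Subtype.dense_iff, Subtype.image_preimage_coe]
    exact closure_minimal ((hdense i).trans (closure_mono
      (Set.inter_subset_inter subset_closure le_rfl))) isClosed_closure
  obtain ⟨⟨y, hy⟩, hyG⟩ :=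
    (dense_iInter_of_isOpen (fun i => (hG i).preimage continuous_subtype_val) hG').nonempty
  exact ⟨y, hy, fun i => Set.mem_iInter.1 hyG i⟩

namespace IsGeneratorOf

variable {X : Type*} [NormedAddCommGroup X] [NormedSpace ℂ X] {Sg : C0Semigroup X}
  {domA : Set X} {A : X → X} {φ : X →L[ℂ] ℂ}

theorem mem_and_eq_of_tendsto (hgen : IsGeneratorOf Sg domA A) {x y : X}
    (h : Tendsto (fun t : ℝ => t⁻¹ • (Sg.T t x - x)) (𝓝[>] 0) (𝓝 y)) :
    x ∈ domA ∧ A x = y :=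
  have hx : x ∈ domA := (hgen.1 x).2 ⟨y, h⟩
  ⟨hx, tendsto_nhds_unique (hgen.2 x hx) h⟩

theorem smul (hgen : IsGeneratorOf Sg domA A) (c : ℂ) {x : X} (hx : x ∈ domA) :
    c • x ∈ domA ∧ A (c • x) = c • A x :=
  hgen.mem_and_eq_of_tendsto <| ((hgen.2 x hx).const_smul c).congr fun t => by
    rw [map_smul, ← smul_sub, smul_comm]

theorem add (hgen : IsGeneratorOf Sg domA A) {x y : X} (hx : x ∈ domA) (hy : y ∈ domA) :
    x + y ∈ domA ∧ A (x + y) = A x + A y :=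
  hgen.mem_and_eq_of_tendsto <| ((hgen.2 x hx).add (hgen.2 y hy)).congr fun t => by
    rw [map_add, ← smul_add, add_sub_add_comm]

theorem semigroup_apply_mem (hgen : IsGeneratorOf Sg domA A) {u : ℝ} (hu : 0 ≤ u) {x : X}
    (hx : x ∈ domA) : Sg.T u x ∈ domA := by
  refine (hgen.mem_and_eq_of_tendsto (y := Sg.T u (A x)) ?_).1
  refine (((Sg.T u).continuous.tendsto _).comp (hgen.2 x hx)).congr' ?_
  filter_upwards [self_mem_nhdsWithin] with t (ht : 0 < t)
  have hcomm : Sg.T u (Sg.T t x) = Sg.T t (Sg.T u x) := by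
    rw [← ContinuousLinearMap.comp_apply, ← Sg.T_add u t hu ht.le, add_comm,
      Sg.T_add t u ht.le hu, ContinuousLinearMap.comp_apply]
  rw [Function.comp_apply, ContinuousLinearMap.map_smul_of_tower, map_sub, hcomm]

theorem exists_mem_apply_eq_one (hgen : IsGeneratorOf Sg domA A)
    (hφ : ¬ ∃ C : ℝ, ∀ x ∈ domA, ‖φ (A x)‖ ≤ C * ‖x‖) : ∃ u ∈ domA, φ u = 1 := by
  by_cases h : ∃ u ∈ domA, φ u ≠ 0
  · obtain ⟨u, hu, hφu⟩ := h
    exact ⟨(φ u)⁻¹ • u, (hgen.smul _ hu).1, by rw [map_smul, smul_eq_mul, inv_mul_cancel₀ hφu]⟩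
  push Not at h
  refine absurd ⟨0, fun x hx => ?_⟩ hφ
  -- `φ` vanishes on `domA`, which contains `T t x`, so it kills every difference quotient of `x`.
  have hquot : Tendsto (fun t : ℝ => φ (t⁻¹ • (Sg.T t x - x))) (𝓝[>] 0) (𝓝 (φ (A x))) :=
    (φ.continuous.tendsto _).comp (hgen.2 x hx)
  have hAx : φ (A x) = 0 := by
    refine tendsto_nhds_unique hquot (tendsto_const_nhds.congr' ?_)
    filter_upwards [self_mem_nhdsWithin] with t (ht : 0 < t)
    rw [φ.map_smul_of_tower, map_sub, h _ (hgen.semigroup_apply_mem ht.le hx), h x hx,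
      sub_zero, smul_zero]
  simp [hAx]

theorem not_bounded_on_ker (hgen : IsGeneratorOf Sg domA A) {u : X} (hu : u ∈ domA)
    (hφu : φ u = 1) (hφ : ¬ ∃ C : ℝ, ∀ x ∈ domA, ‖φ (A x)‖ ≤ C * ‖x‖) :
    ¬ ∃ C : ℝ, ∀ w ∈ domA, φ w = 0 → ‖φ (A w)‖ ≤ C * ‖w‖ := by
  rintro ⟨C, hC⟩
  refine hφ ⟨max C 0 * (1 + ‖φ‖ * ‖u‖) + ‖φ‖ * ‖φ (A u)‖, fun x hx => ?_⟩
  obtain ⟨hw, hAw⟩ := hgen.add hx (hgen.smul (-φ x) hu).1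
  set w := x + (-φ x) • u
  have hφw : φ w = 0 := by simp [w, hφu]
  have hφAx : φ (A x) = φ (A w) + φ x * φ (A u) := by
    rw [hAw, (hgen.smul _ hu).2]; simp
  have hφx : ‖φ x‖ ≤ ‖φ‖ * ‖x‖ := φ.le_opNorm x
  have hwx : ‖w‖ ≤ (1 + ‖φ‖ * ‖u‖) * ‖x‖ :=
    calc ‖w‖ ≤ ‖x‖ + ‖φ x‖ * ‖u‖ := (norm_add_le _ _).trans_eq (by rw [norm_smul, norm_neg])
      _ ≤ ‖x‖ + ‖φ‖ * ‖x‖ * ‖u‖ := by gcongr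
      _ = (1 + ‖φ‖ * ‖u‖) * ‖x‖ := by ring
  calc ‖φ (A x)‖ ≤ ‖φ (A w)‖ + ‖φ x‖ * ‖φ (A u)‖ := by
        simpa only [hφAx, norm_mul] using norm_add_le (φ (A w)) (φ x * φ (A u))
    _ ≤ max C 0 * ((1 + ‖φ‖ * ‖u‖) * ‖x‖) + ‖φ‖ * ‖x‖ * ‖φ (A u)‖ := by
        gcongr
        exact (hC w hw hφw).trans (by gcongr; exact le_max_left C 0)
    _ = (max C 0 * (1 + ‖φ‖ * ‖u‖) + ‖φ‖ * ‖φ (A u)‖) * ‖x‖ := by ring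

theorem exists_ker_norm_lt_re_lt (hgen : IsGeneratorOf Sg domA A) {u : X} (hu : u ∈ domA)
    (hφu : φ u = 1) (hφ : ¬ ∃ C : ℝ, ∀ x ∈ domA, ‖φ (A x)‖ ≤ C * ‖x‖) {δ : ℝ} (hδ : 0 < δ)
    (R : ℝ) : ∃ x ∈ domA, φ x = 0 ∧ ‖x‖ < δ ∧ R < (φ (A x)).re := by
  have hA0 : A 0 = 0 := by simpa using (hgen.smul 0 hu).2
  obtain ⟨w, hw, hφw, hlt⟩ := (by simpa using hgen.not_bounded_on_ker hu hφu hφ :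
    ∀ C : ℝ, ∃ w ∈ domA, φ w = 0 ∧ C * ‖w‖ < ‖φ (A w)‖) (2 * |R| / δ)
  have hw0 : 0 < ‖w‖ := norm_pos_iff.2 fun h => by simp [h, hA0] at hlt
  set z := φ (A w)
  have hz0 : 0 < ‖z‖ := (mul_nonneg (by positivity) hw0.le).trans_lt hlt
  -- rescale `w` to norm `δ / 2` and rotate it so that `φ (A x)` becomes a positive real
  set r : ℝ := δ / 2 * ‖z‖ / ‖w‖
  have hφAx : φ (A (((r : ℂ) / z) • w)) = r := by
    rw [(hgen.smul _ hw).2, map_smul, smul_eq_mul, div_mul_cancel₀ _ (norm_pos_iff.1 hz0)]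
  refine ⟨((r : ℂ) / z) • w, (hgen.smul _ hw).1, by simp [hφw], ?_, ?_⟩
  · rw [norm_smul, norm_div, Complex.norm_real, Real.norm_of_nonneg (by positivity)]
    calc r / ‖z‖ * ‖w‖ = δ / 2 := by simp only [r]; field_simp
      _ < δ := half_lt_self hδ
  · rw [hφAx, Complex.ofReal_re]
    calc R ≤ |R| := le_abs_self R
      _ = δ / 2 * (2 * |R| / δ * ‖w‖) / ‖w‖ := by field_simp
      _ < r := by simp only [r]; gcongr

theorem tendsto_re_apply_pow (hgen : IsGeneratorOf Sg domA A) {s : X} (hs : s ∈ domA)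
    (hφs : φ s = 1) :
    Tendsto (fun n : ℕ => (φ (Sg.T (1 / n) s)).re ^ n) atTop (𝓝 (Real.exp (φ (A s)).re)) := by
  have hn : Tendsto (fun n : ℕ => 1 / (n : ℝ)) atTop (𝓝[>] 0) := by
    simpa only [one_div, Function.comp_def] using
      tendsto_inv_atTop_nhdsGT_zero.comp tendsto_natCast_atTop_atTop
  have hquot : Tendsto (fun n : ℕ => (n : ℝ) * ((φ (Sg.T (1 / n) s)).re - 1)) atTop
      (𝓝 (φ (A s)).re) := by
    refine (((Complex.continuous_re.comp φ.continuous).tendsto _).comp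
      ((hgen.2 s hs).comp hn)).congr fun n => ?_
    simp [φ.map_smul_of_tower, hφs, Complex.real_smul]
  simpa using Real.tendsto_one_add_pow_exp_of_tendsto hquot

theorem eventually_exp_lt_norm_pow (hgen : IsGeneratorOf Sg domA A) {s : X} (hs : s ∈ domA)
    (hφs : φ s = 1) {a : ℝ} (ha : a < (φ (A s)).re) :
    ∀ᶠ n : ℕ in atTop, Real.exp a < ‖φ (Sg.T (1 / n) s)‖ ^ n := by
  filter_upwards [(hgen.tendsto_re_apply_pow hs hφs).eventually_const_lt (Real.exp_lt_exp.2 ha)]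
    with n hn
  calc Real.exp a < (φ (Sg.T (1 / n) s)).re ^ n := hn
    _ ≤ |(φ (Sg.T (1 / n) s)).re| ^ n := (le_abs_self _).trans_eq (abs_pow _ n)
    _ ≤ ‖φ (Sg.T (1 / n) s)‖ ^ n := by gcongr; exact Complex.abs_re_le_norm _

theorem exists_apply_eq_one_frequently_exp_lt [CompleteSpace X]
    (hgen : IsGeneratorOf Sg domA A) (hφ : ¬ ∃ C : ℝ, ∀ x ∈ domA, ‖φ (A x)‖ ≤ C * ‖x‖) :
    ∃ y, φ y = 1 ∧ ∀ k : ℕ, ∃ᶠ n : ℕ in atTop, Real.exp k < ‖φ (Sg.T (1 / n) y)‖ ^ n := by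
  obtain ⟨u, hu, hφu⟩ := hgen.exists_mem_apply_eq_one hφ
  set D : Set X := {s | s ∈ domA ∧ φ s = 1}
  set G : ℕ × ℕ → Set X := fun p => ⋃ n ≥ p.2, {x | Real.exp p.1 < ‖φ (Sg.T (1 / n) x)‖ ^ n}
  have hG : ∀ p, IsOpen (G p) := fun p =>
    isOpen_biUnion fun n _ => isOpen_lt continuous_const (by fun_prop)
  have hdense : ∀ p, D ⊆ closure (D ∩ G p) := by
    rintro ⟨k, N⟩ s ⟨hs, hφs⟩
    refine Metric.mem_closure_iff.2 fun δ hδ => ?_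
    obtain ⟨x, hx, hφx, hxδ, hxre⟩ :=
      hgen.exists_ker_norm_lt_re_lt hu hφu hφ hδ (k - (φ (A s)).re)
    obtain ⟨hsx, hAsx⟩ := hgen.add hs hx
    have hφsx : φ (s + x) = 1 := by rw [map_add, hφs, hφx, add_zero]
    have hre : (k : ℝ) < (φ (A (s + x))).re := by
      rw [hAsx, map_add, Complex.add_re]; linarith
    obtain ⟨n, hn, hnN⟩ :=
      ((hgen.eventually_exp_lt_norm_pow hsx hφsx hre).and (eventually_ge_atTop N)).exists
    exact ⟨s + x, ⟨⟨hsx, hφsx⟩, Set.mem_biUnion hnN hn⟩, by simpa [dist_eq_norm] using hxδ⟩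
  obtain ⟨y, hyD, hyG⟩ :=
    exists_mem_closure_forall_mem_of_subset_closure_inter (D := D) ⟨u, hu, hφu⟩ hG hdense
  refine ⟨y, closure_minimal (fun s hs => hs.2) (isClosed_eq φ.continuous continuous_const) hyD,
    fun k => frequently_atTop.2 fun N => ?_⟩
  simpa [G] using hyG (k, N)

end IsGeneratorOf

theorem ContinuousLinearMap.apply_pow_comp_smulRight_apply {𝕜 E : Type*} [NormedField 𝕜]
    [NormedAddCommGroup E] [NormedSpace 𝕜 E] (S : E →L[𝕜] E) (φ : E →L[𝕜] 𝕜) {y : E}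
    (hφy : φ y = 1) (n : ℕ) : φ (((S.comp (φ.smulRight y)) ^ n) y) = φ (S y) ^ n := by
  induction n with
  | zero => simp [hφy]
  | succ n ih =>
    rw [pow_succ', mul_apply_eq_comp, ContinuousLinearMap.comp_apply,
      ContinuousLinearMap.smulRight_apply, map_smul, map_smul, smul_eq_mul, ih, pow_succ]

/-- if `φ ∉ dom A*`, then for every `ε > 0` there is `y` with `φ y = 1`
and a strictly increasing sequence `n_k` with `|φ((e^{(1/n_k)A} P_y)^{n_k} y)| ≥ e^k - 2ε`;
in particular `(e^{(1/n)A} P_y)^n y` does not converge weakly. -/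
theorem stmt_11 {X : Type*} [NormedAddCommGroup X] [NormedSpace ℂ X] [CompleteSpace X]
    (Sg : C0Semigroup X) (domA : Set X) (A : X → X)
    (hgen : IsGeneratorOf Sg domA A)
    (φ : X →L[ℂ] ℂ)
    (hφ : ¬ ∃ C : ℝ, ∀ x ∈ domA, ‖φ (A x)‖ ≤ C * ‖x‖)
    (ε : ℝ) (hε : 0 < ε) :
    ∃ y : X, φ y = 1 ∧
      (∃ nk : ℕ → ℕ, StrictMono nk ∧ (∀ k : ℕ, 1 ≤ nk k) ∧
        ∀ k : ℕ,
          Real.exp k - 2 * ε ≤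
            ‖φ ((((Sg.T (1 / (nk k))).comp (φ.smulRight y)) ^ nk k) y)‖) ∧
      ¬ ∃ z : X, ∀ ψ : X →L[ℂ] ℂ,
          Tendsto
            (fun n : ℕ => ψ ((((Sg.T (1 / n)).comp (φ.smulRight y)) ^ n) y))
            atTop (𝓝 (ψ z)) := by
  obtain ⟨y, hφy, hy⟩ := hgen.exists_apply_eq_one_frequently_exp_lt hφ
  obtain ⟨nk, hmono, hnk⟩ := extraction_forall_of_frequently hy
  have hiter (n : ℕ) : ‖φ ((((Sg.T (1 / n)).comp (φ.smulRight y)) ^ n) y)‖ =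
      ‖φ (Sg.T (1 / n) y)‖ ^ n := by
    rw [(Sg.T _).apply_pow_comp_smulRight_apply φ hφy, norm_pow]
  -- `n = 0` is excluded because `‖φ y‖ ^ 0 = 1 ≤ exp k`
  have hnk_pos (k : ℕ) : 1 ≤ nk k := Nat.one_le_iff_ne_zero.2 fun h => by
    have := hnk k
    rw [h, pow_zero] at this
    exact (Real.one_le_exp k.cast_nonneg).not_gt this
  refine ⟨y, hφy, ⟨nk, hmono, hnk_pos, fun k => by rw [hiter]; linarith [hnk k]⟩, ?_⟩
  rintro ⟨z, hz⟩
  have hunbdd : Tendsto (fun k => ‖φ ((((Sg.T (1 / (nk k))).comp (φ.smulRight y)) ^ nk k) y)‖)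
      atTop atTop :=
    tendsto_atTop_mono (fun k => (hnk k).le.trans_eq (hiter (nk k)).symm)
      (Real.tendsto_exp_atTop.comp tendsto_natCast_atTop_atTop)
  exact not_tendsto_atTop_of_tendsto_nhds ((hz φ).norm.comp hmono.tendsto_atTop) hunbdd
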